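/- arXiv:1709.07729 — 4 statements merged into one kernel-verified Lean document; each statement's English description precedes it below -/
import Mathlib

section
/- If the n×s matrices A₁,…,A_r over a field K satisfy Aᵢᵀ Aᵢ = 1_s for all i and Aᵢᵀ Aⱼ + Aⱼᵀ Aᵢ = 0 for all i ≠ j, then the (2n)×(2s) matrices A₁ ⊗ [[1,0],[0,1]], A₁ ⊗ [[0,1],[-1,0]], and Aⱼ ⊗ [[1,0],[0,-1]] for 2 ≤ j ≤ r (Kronecker products) also satisfy the Hurwitz equations; hence an [r,s,n] sum-of-squares formula yields an [r+1, 2s, 2n] formula. -/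
open Matrix Kronecker

/-- The Hurwitz equations for a family of matrices. -/
def HurwitzFamily {K : Type*} [Field K] {ι n s : Type*} [Fintype n] [DecidableEq s]
    (A : ι → Matrix n s K) : Prop :=
  (∀ i, (A i)ᵀ * A i = 1) ∧ ∀ i j, i ≠ j → (A i)ᵀ * A j + (A j)ᵀ * A i = 0

theorem doubling_lemma {K : Type*} [Field K] {r s n : ℕ}
    (A : Fin (r + 1) → Matrix (Fin n) (Fin s) K)
    (hA : HurwitzFamily A) :
    HurwitzFamily
      (Fin.cons (A 0 ⊗ₖ (!![1, 0; 0, 1] : Matrix (Fin 2) (Fin 2) K))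
        (Fin.cons (A 0 ⊗ₖ (!![0, 1; -1, 0] : Matrix (Fin 2) (Fin 2) K))
          (fun j : Fin r => A j.succ ⊗ₖ (!![1, 0; 0, -1] : Matrix (Fin 2) (Fin 2) K))
          : Fin (r + 1) → Matrix (Fin n × Fin 2) (Fin s × Fin 2) K)
        : Fin (r + 2) → Matrix (Fin n × Fin 2) (Fin s × Fin 2) K) := by
  obtain ⟨h1, h2⟩ := hA
  have key : ∀ (P P' : Matrix (Fin n) (Fin s) K) (Q Q' : Matrix (Fin 2) (Fin 2) K),
      (P ⊗ₖ Q)ᵀ * (P' ⊗ₖ Q') = (Pᵀ * P') ⊗ₖ (Qᵀ * Q') := by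
    intro P P' Q Q'
    rw [← kroneckerMap_transpose, mul_kronecker_mul]
  have q1 : (!![1,0;0,1]ᵀ * !![1,0;0,1] : Matrix (Fin 2) (Fin 2) K) = 1 := by
    ext a b; fin_cases a <;> fin_cases b <;>
      simp [Matrix.mul_apply, Fin.sum_univ_two, Matrix.transpose_apply, Matrix.one_fin_two, Matrix.vecHead, Matrix.vecTail]
  have q2 : (!![0,1;-1,0]ᵀ * !![0,1;-1,0] : Matrix (Fin 2) (Fin 2) K) = 1 := by
    ext a b; fin_cases a <;> fin_cases b <;>
      simp [Matrix.mul_apply, Fin.sum_univ_two, Matrix.transpose_apply, Matrix.one_fin_two, Matrix.vecHead, Matrix.vecTail]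
  have q3 : (!![1,0;0,-1]ᵀ * !![1,0;0,-1] : Matrix (Fin 2) (Fin 2) K) = 1 := by
    ext a b; fin_cases a <;> fin_cases b <;>
      simp [Matrix.mul_apply, Fin.sum_univ_two, Matrix.transpose_apply, Matrix.one_fin_two, Matrix.vecHead, Matrix.vecTail]
  have q12 : (!![1,0;0,1]ᵀ * !![0,1;-1,0] + !![0,1;-1,0]ᵀ * !![1,0;0,1]
      : Matrix (Fin 2) (Fin 2) K) = 0 := by
    ext a b; fin_cases a <;> fin_cases b <;>
      simp [Matrix.mul_apply, Fin.sum_univ_two, Matrix.transpose_apply, Matrix.vecHead, Matrix.vecTail]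
  have q13 : (!![1,0;0,1]ᵀ * !![1,0;0,-1] : Matrix (Fin 2) (Fin 2) K)
      = !![1,0;0,-1]ᵀ * !![1,0;0,1] := by
    ext a b; fin_cases a <;> fin_cases b <;>
      simp [Matrix.mul_apply, Fin.sum_univ_two, Matrix.transpose_apply, Matrix.vecHead, Matrix.vecTail]
  have q23 : (!![0,1;-1,0]ᵀ * !![1,0;0,-1] : Matrix (Fin 2) (Fin 2) K)
      = !![1,0;0,-1]ᵀ * !![0,1;-1,0] := by
    ext a b; fin_cases a <;> fin_cases b <;>
      simp [Matrix.mul_apply, Fin.sum_univ_two, Matrix.transpose_apply, Matrix.vecHead, Matrix.vecTail]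
  constructor
  · intro i
    refine Fin.cases ?_ (fun i => Fin.cases ?_ (fun i => ?_) i) i <;>
      simp only [Fin.cons_zero, Fin.cons_succ, key, h1, q1, q2, q3, one_kronecker_one]
  · intro i j hij
    have anti : ∀ i' : Fin r, (A 0)ᵀ * A i'.succ + (A i'.succ)ᵀ * A 0 = 0 :=
      fun i' => h2 0 i'.succ (Fin.succ_ne_zero i').symm
    revert hij
    refine Fin.cases ?_ (fun i => Fin.cases ?_ (fun i => ?_) i) i <;>
      refine Fin.cases ?_ (fun j' => Fin.cases ?_ (fun j' => ?_) j') j <;>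
      intro h <;>
      simp only [Fin.cons_zero, Fin.cons_succ, key] <;>
      try exact absurd rfl h
    · rw [← kronecker_add, q12, kronecker_zero]
    · rw [q13, ← add_kronecker, anti j', zero_kronecker]
    · rw [add_comm, ← kronecker_add, q12, kronecker_zero]
    · rw [q23, ← add_kronecker, anti j', zero_kronecker]
    · rw [← q13, ← add_kronecker, add_comm ((A i.succ)ᵀ * A 0), anti i, zero_kronecker]
    · rw [← q23, ← add_kronecker, add_comm ((A i.succ)ᵀ * A 0), anti i, zero_kronecker]
    · rw [← add_kronecker, h2 i.succ j'.succ (fun hh => h (congrArg Fin.succ hh)),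
        zero_kronecker]
end

section
/- Let A₁,…,A_p and B₁,…,B_q be n×s matrices over a field K, each family satisfying the Hurwitz equations, and suppose the families are amicable: Aᵢᵀ B_k = B_kᵀ Aᵢ for all i,k. Then the (2n)×(2s) matrices A₁⊗[[1,0],[0,1]], A₁⊗[[0,1],[-1,0]], Aⱼ⊗[[1,0],[0,-1]] (2 ≤ j ≤ p) satisfy the Hurwitz equations; the matrices A₁⊗[[0,1],[1,0]], B_k⊗[[1,0],[0,-1]] (1 ≤ k ≤ q) satisfy the Hurwitz equations; and every matrix of the first list is amicable with every matrix of the second list. -/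
open Matrix Kronecker

section Aux

variable {K : Type*} [Field K] {n s : ℕ}

lemma kron_tmul (X Y : Matrix (Fin n) (Fin s) K) (C D : Matrix (Fin 2) (Fin 2) K) :
    (X ⊗ₖ C)ᵀ * (Y ⊗ₖ D) = (Xᵀ * Y) ⊗ₖ (Cᵀ * D) := by
  rw [mul_kronecker_mul]
  congr 1 <;> exact (kroneckerMap_transpose _ _ _).symm

lemma tfin (a b c d : K) : (!![a, b; c, d])ᵀ = !![a, c; b, d] := by
  ext i j; fin_cases i <;> fin_cases j <;> rfl

lemma neg_kron (X : Matrix (Fin n) (Fin s) K) (C : Matrix (Fin 2) (Fin 2) K) :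
    (-X) ⊗ₖ C = -(X ⊗ₖ C) := by
  ext i j; simp [Matrix.kroneckerMap_apply]

lemma kron_neg (X : Matrix (Fin n) (Fin s) K) (C : Matrix (Fin 2) (Fin 2) K) :
    X ⊗ₖ (-C) = -(X ⊗ₖ C) := by
  ext i j; simp [Matrix.kroneckerMap_apply]

end Aux

theorem amicable_doubling {K : Type*} [Field K] {p q s n : ℕ}
    (A : Fin (p + 1) → Matrix (Fin n) (Fin s) K)
    (B : Fin q → Matrix (Fin n) (Fin s) K)
    (hA : HurwitzFamily A) (hB : HurwitzFamily B)
    (hAB : ∀ i k, (A i)ᵀ * B k = (B k)ᵀ * A i) :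
    let L : Fin (p + 2) → Matrix (Fin n × Fin 2) (Fin s × Fin 2) K :=
      Fin.cons (A 0 ⊗ₖ (!![1, 0; 0, 1] : Matrix (Fin 2) (Fin 2) K))
        (Fin.cons (A 0 ⊗ₖ (!![0, 1; -1, 0] : Matrix (Fin 2) (Fin 2) K))
          (fun j : Fin p => A j.succ ⊗ₖ (!![1, 0; 0, -1] : Matrix (Fin 2) (Fin 2) K)))
    let M : Fin (q + 1) → Matrix (Fin n × Fin 2) (Fin s × Fin 2) K :=
      Fin.cons (A 0 ⊗ₖ (!![0, 1; 1, 0] : Matrix (Fin 2) (Fin 2) K))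
        (fun k : Fin q => B k ⊗ₖ (!![1, 0; 0, -1] : Matrix (Fin 2) (Fin 2) K))
    HurwitzFamily L ∧ HurwitzFamily M ∧ ∀ i k, (L i)ᵀ * M k = (M k)ᵀ * L i := by
  intro L M
  obtain ⟨hA1, hA2⟩ := hA
  obtain ⟨hB1, hB2⟩ := hB
  have hAsucc : ∀ j : Fin p, (A 0)ᵀ * A j.succ + (A j.succ)ᵀ * A 0 = 0 := fun j =>
    hA2 0 j.succ (by simp [Fin.ext_iff])
  -- 2×2 products
  have e11 : (!![(1:K), 0; 0, 1])ᵀ * !![1, 0; 0, 1] = 1 := by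
    rw [tfin, Matrix.mul_fin_two, Matrix.one_fin_two]; norm_num
  have e22 : (!![(0:K), 1; -1, 0])ᵀ * !![0, 1; -1, 0] = 1 := by
    rw [tfin, Matrix.mul_fin_two, Matrix.one_fin_two]; norm_num
  have e33 : (!![(1:K), 0; 0, -1])ᵀ * !![1, 0; 0, -1] = 1 := by
    rw [tfin, Matrix.mul_fin_two, Matrix.one_fin_two]; norm_num
  have e44 : (!![(0:K), 1; 1, 0])ᵀ * !![0, 1; 1, 0] = 1 := by
    rw [tfin, Matrix.mul_fin_two, Matrix.one_fin_two]; norm_num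
  have e12 : (!![(1:K), 0; 0, 1])ᵀ * !![0, 1; -1, 0] = !![0, 1; -1, 0] := by
    rw [tfin, Matrix.mul_fin_two]; norm_num
  have e21 : (!![(0:K), 1; -1, 0])ᵀ * !![1, 0; 0, 1] = !![0, -1; 1, 0] := by
    rw [tfin, Matrix.mul_fin_two]; norm_num
  have e13 : (!![(1:K), 0; 0, 1])ᵀ * !![1, 0; 0, -1] = !![1, 0; 0, -1] := by
    rw [tfin, Matrix.mul_fin_two]; norm_num
  have e31 : (!![(1:K), 0; 0, -1])ᵀ * !![1, 0; 0, 1] = !![1, 0; 0, -1] := by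
    rw [tfin, Matrix.mul_fin_two]; norm_num
  have e23 : (!![(0:K), 1; -1, 0])ᵀ * !![1, 0; 0, -1] = !![0, 1; 1, 0] := by
    rw [tfin, Matrix.mul_fin_two]; norm_num
  have e32 : (!![(1:K), 0; 0, -1])ᵀ * !![0, 1; -1, 0] = !![0, 1; 1, 0] := by
    rw [tfin, Matrix.mul_fin_two]; norm_num
  have e14 : (!![(1:K), 0; 0, 1])ᵀ * !![0, 1; 1, 0] = !![0, 1; 1, 0] := by
    rw [tfin, Matrix.mul_fin_two]; norm_num
  have e41 : (!![(0:K), 1; 1, 0])ᵀ * !![1, 0; 0, 1] = !![0, 1; 1, 0] := by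
    rw [tfin, Matrix.mul_fin_two]; norm_num
  have e24 : (!![(0:K), 1; -1, 0])ᵀ * !![0, 1; 1, 0] = !![(-1 : K), 0; 0, 1] := by
    rw [tfin, Matrix.mul_fin_two]; norm_num
  have e42 : (!![(0:K), 1; 1, 0])ᵀ * !![0, 1; -1, 0] = !![(-1 : K), 0; 0, 1] := by
    rw [tfin, Matrix.mul_fin_two]; norm_num
  have e34 : (!![(1:K), 0; 0, -1])ᵀ * !![0, 1; 1, 0] = !![0, 1; -1, 0] := by
    rw [tfin, Matrix.mul_fin_two]; norm_num
  have e43 : (!![(0:K), 1; 1, 0])ᵀ * !![1, 0; 0, -1] = !![0, -1; 1, 0] := by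
    rw [tfin, Matrix.mul_fin_two]; norm_num
  have nn : (!![(0:K), -1; 1, 0]) = -!![0, 1; -1, 0] := by
    ext i j; fin_cases i <;> fin_cases j <;> simp
  have hL0 : L 0 = A 0 ⊗ₖ !![1, 0; 0, 1] := rfl
  have hL1 : L (Fin.succ 0) = A 0 ⊗ₖ !![0, 1; -1, 0] := by simp [L]
  have hLj : ∀ j : Fin p, L j.succ.succ = A j.succ ⊗ₖ !![1, 0; 0, -1] := fun j => by
    simp [L]
  have hM0 : M 0 = A 0 ⊗ₖ !![0, 1; 1, 0] := rfl
  have hMk : ∀ k : Fin q, M k.succ = B k ⊗ₖ !![1, 0; 0, -1] := fun k => by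
    simp [M]
  -- key anticommuting cases for L
  have k01 : (L 0)ᵀ * L (Fin.succ 0) + (L (Fin.succ 0))ᵀ * L 0 = 0 := by
    rw [hL0, hL1, kron_tmul, kron_tmul, hA1, e12, e21, ← kronecker_add, nn,
      add_neg_cancel, kronecker_zero]
  have k0j : ∀ j : Fin p, (L 0)ᵀ * L j.succ.succ + (L j.succ.succ)ᵀ * L 0 = 0 := fun j => by
    rw [hL0, hLj, kron_tmul, kron_tmul, e13, e31, ← add_kronecker, hAsucc, zero_kronecker]
  have k1j : ∀ j : Fin p,
      (L (Fin.succ 0))ᵀ * L j.succ.succ + (L j.succ.succ)ᵀ * L (Fin.succ 0) = 0 := fun j => by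
    rw [hL1, hLj, kron_tmul, kron_tmul, e23, e32, ← add_kronecker, hAsucc, zero_kronecker]
  have kjj : ∀ j j' : Fin p, j ≠ j' →
      (L j.succ.succ)ᵀ * L j'.succ.succ + (L j'.succ.succ)ᵀ * L j.succ.succ = 0 := fun j j' h => by
    rw [hLj, hLj, kron_tmul, kron_tmul, e33, ← add_kronecker,
      hA2 j.succ j'.succ (by simpa using h), zero_kronecker]
  refine ⟨⟨?_, ?_⟩, ⟨?_, ?_⟩, ?_⟩
  · intro i
    refine Fin.cases ?_ (fun i => Fin.cases ?_ (fun j => ?_) i) i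
    · rw [hL0, kron_tmul, hA1, e11, one_kronecker_one]
    · rw [hL1, kron_tmul, hA1, e22, one_kronecker_one]
    · rw [hLj, kron_tmul, hA1, e33, one_kronecker_one]
  · intro i j hij
    revert hij
    refine Fin.cases ?_ (fun i' => Fin.cases ?_ (fun j' => ?_) i') i <;>
      [ (refine Fin.cases ?_ (fun i' => Fin.cases ?_ (fun j' => ?_) i') j);
        (refine Fin.cases ?_ (fun i'' => Fin.cases ?_ (fun j'' => ?_) i'') j);
        (refine Fin.cases ?_ (fun i'' => Fin.cases ?_ (fun j'' => ?_) i'') j) ] <;> intro hij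
    · exact absurd rfl hij
    · exact k01
    · exact k0j _
    · rw [add_comm]; exact k01
    · exact absurd rfl hij
    · exact k1j _
    · rw [add_comm]; exact k0j _
    · rw [add_comm]; exact k1j _
    · exact kjj _ _ (fun h => hij (by rw [h]))
  · intro i
    refine Fin.cases ?_ (fun k => ?_) i
    · rw [hM0, kron_tmul, hA1, e44, one_kronecker_one]
    · rw [hMk, kron_tmul, hB1, e33, one_kronecker_one]
  · intro i j hij
    revert hij
    refine Fin.cases ?_ (fun k => ?_) i <;>
      [ (refine Fin.cases ?_ (fun k' => ?_) j); (refine Fin.cases ?_ (fun k' => ?_) j) ] <;>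
      intro hij
    · exact absurd rfl hij
    · rw [hM0, hMk, kron_tmul, kron_tmul, e43, e34, hAB 0 k', ← kronecker_add, nn,
        neg_add_cancel, kronecker_zero]
    · rw [hMk, hM0, kron_tmul, kron_tmul, e34, e43, hAB 0 k, ← kronecker_add, nn,
        add_neg_cancel, kronecker_zero]
    · rw [hMk, hMk, kron_tmul, kron_tmul, e33, ← add_kronecker,
        hB2 k k' (fun h => hij (by rw [h])), zero_kronecker]
  · intro i k
    refine Fin.cases ?_ (fun i' => Fin.cases ?_ (fun j => ?_) i') i <;>
      [ (refine Fin.cases ?_ (fun k' => ?_) k); (refine Fin.cases ?_ (fun k' => ?_) k);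
        (refine Fin.cases ?_ (fun k' => ?_) k) ]
    · rw [hL0, hM0, kron_tmul, kron_tmul, hA1, e14, e41]
    · rw [hL0, hMk, kron_tmul, kron_tmul, e13, e31, hAB 0 k']
    · rw [hL1, hM0, kron_tmul, kron_tmul, hA1, e24, e42]
    · rw [hL1, hMk, kron_tmul, kron_tmul, e23, e32, hAB 0 k']
    · have hz : (A 0)ᵀ * A j.succ = -((A j.succ)ᵀ * A 0) :=
        eq_neg_of_add_eq_zero_left (hAsucc j)
      rw [hLj, hM0, kron_tmul, kron_tmul, e34, e43, hz, nn, neg_kron, kron_neg, neg_neg]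
    · rw [hLj, hMk, kron_tmul, kron_tmul, e33, hAB j.succ k']
end

section
/- Let A₁,…,A_r, B be n×s matrices over a field K satisfying the Hurwitz equations (so they give an [r+1, s, n] formula), and let C₁,…,C_p, D be m×q matrices with Dᵀ D = 1_q, the C_k satisfying the Hurwitz equations, and D amicable with each C_k (Dᵀ C_k = C_kᵀ D). Then the nm×sq matrices A₁⊗D, …, A_r⊗D, B⊗C₁, …, B⊗C_p satisfy the Hurwitz equations, giving an [r+p, sq, nm] sum-of-squares formula. -/
open Matrix Kronecker

theorem combine_formulas {K : Type*} [Field K] {r p s n q m : ℕ}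
    (A : Fin r → Matrix (Fin n) (Fin s) K) (B : Matrix (Fin n) (Fin s) K)
    (C : Fin p → Matrix (Fin m) (Fin q) K) (D : Matrix (Fin m) (Fin q) K)
    (hAB : HurwitzFamily (Fin.snoc A B : Fin (r + 1) → Matrix (Fin n) (Fin s) K))
    (hD : Dᵀ * D = 1)
    (hC : HurwitzFamily C)
    (hDC : ∀ k, Dᵀ * C k = (C k)ᵀ * D) :
    HurwitzFamily
      (Sum.elim (fun j => A j ⊗ₖ D) (fun k => B ⊗ₖ C k)
        : Fin r ⊕ Fin p → Matrix (Fin n × Fin m) (Fin s × Fin q) K) := by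
  obtain ⟨h1, h2⟩ := hAB
  obtain ⟨hc1, hc2⟩ := hC
  have hA1 : ∀ j, (A j)ᵀ * A j = 1 := fun j => by
    simpa [Fin.snoc_castSucc] using h1 (Fin.castSucc j)
  have hB1 : Bᵀ * B = 1 := by simpa using h1 (Fin.last r)
  have hA2 : ∀ j j', j ≠ j' → (A j)ᵀ * A j' + (A j')ᵀ * A j = 0 := fun j j' h => by
    simpa [Fin.snoc_castSucc] using
      h2 (Fin.castSucc j) (Fin.castSucc j') (fun hh => h (Fin.castSucc_injective _ hh))
  have hAB2 : ∀ j, (A j)ᵀ * B + Bᵀ * A j = 0 := fun j => by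
    simpa [Fin.snoc_castSucc, Fin.snoc_last] using
      h2 (Fin.castSucc j) (Fin.last r) (Fin.ne_last_of_lt (Fin.castSucc_lt_last j))
  constructor
  · rintro (j | k)
    · simp only [Sum.elim_inl]
      rw [← Matrix.kroneckerMap_transpose, ← Matrix.mul_kronecker_mul, hA1, hD,
        Matrix.one_kronecker_one]
    · simp only [Sum.elim_inr]
      rw [← Matrix.kroneckerMap_transpose, ← Matrix.mul_kronecker_mul, hB1, hc1,
        Matrix.one_kronecker_one]
  · rintro (j | k) (j' | k') hne
    · simp only [Sum.elim_inl]
      rw [← Matrix.kroneckerMap_transpose, ← Matrix.kroneckerMap_transpose,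
        ← Matrix.mul_kronecker_mul, ← Matrix.mul_kronecker_mul, hD,
        ← Matrix.add_kronecker, hA2 j j' (by simpa using hne), Matrix.zero_kronecker]
    · simp only [Sum.elim_inl, Sum.elim_inr]
      rw [← Matrix.kroneckerMap_transpose, ← Matrix.kroneckerMap_transpose,
        ← Matrix.mul_kronecker_mul, ← Matrix.mul_kronecker_mul, hDC,
        ← Matrix.add_kronecker, hAB2 j, Matrix.zero_kronecker]
    · simp only [Sum.elim_inl, Sum.elim_inr]
      rw [← Matrix.kroneckerMap_transpose, ← Matrix.kroneckerMap_transpose,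
        ← Matrix.mul_kronecker_mul, ← Matrix.mul_kronecker_mul, hDC,
        ← Matrix.add_kronecker]
      rw [show Bᵀ * A j' + (A j')ᵀ * B = 0 by rw [add_comm]; exact hAB2 j']
      rw [Matrix.zero_kronecker]
    · simp only [Sum.elim_inr]
      rw [← Matrix.kroneckerMap_transpose, ← Matrix.kroneckerMap_transpose,
        ← Matrix.mul_kronecker_mul, ← Matrix.mul_kronecker_mul, hB1,
        ← Matrix.kronecker_add, hc2 k k' (by simpa using hne), Matrix.kronecker_zero]
end

section
/- For every m ≥ 3 and n = 2^m, a sum-of-squares formula of size [ρ(n), n, n] exists over any field K, constructed by iterated extended doubling starting from the [8,8,8] octonion formula, where ρ is the Hurwitz–Radon function. -/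
open Matrix

/-- The Hurwitz–Radon function: ρ(2^(4a+b)) = 8a + 2^b for 0 ≤ b ≤ 3. -/
def hrRho (n : ℕ) : ℕ := 8 * (n.factorization 2 / 4) + 2 ^ (n.factorization 2 % 4)

/-- Existence of a sum-of-squares formula of size [r, s, n] over K. -/
def SOSFormula (K : Type*) [Field K] (r s n : ℕ) : Prop :=
  ∃ A : Fin r → Matrix (Fin n) (Fin s) K,
    (∀ i, (A i)ᵀ * A i = 1) ∧ ∀ i j, i ≠ j → (A i)ᵀ * A j + (A j)ᵀ * A i = 0


namespace HRaux

variable {ι κ : Type*} [Fintype ι] [Fintype κ]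

/-- dot product over ZMod 2 -/
def dotp (a b : ι → ZMod 2) : ZMod 2 := ∑ i, a i * b i

def Qf (p : (ι → ZMod 2) × (ι → ZMod 2)) : ZMod 2 := dotp p.1 p.2

def Bf (p q : (ι → ZMod 2) × (ι → ZMod 2)) : ZMod 2 := dotp p.1 q.2 + dotp p.2 q.1

lemma dotp_comm (a b : ι → ZMod 2) : dotp a b = dotp b a := by
  unfold dotp; exact Finset.sum_congr rfl fun i _ => mul_comm _ _

lemma dotp_add_left (a b c : ι → ZMod 2) : dotp (a + b) c = dotp a c + dotp b c := by
  unfold dotp; rw [← Finset.sum_add_distrib]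
  exact Finset.sum_congr rfl fun i _ => by simp [add_mul]

lemma dotp_add_right (a b c : ι → ZMod 2) : dotp a (b + c) = dotp a b + dotp a c := by
  rw [dotp_comm, dotp_add_left, dotp_comm b a, dotp_comm c a]

lemma dotp_zero_left (b : ι → ZMod 2) : dotp 0 b = 0 := by simp [dotp]

lemma dotp_zero_right (a : ι → ZMod 2) : dotp a 0 = 0 := by simp [dotp]

/-- A good family of k symplectic vectors. -/
def Good (k : ℕ) (ι : Type*) [Fintype ι] : Prop :=
  ∃ v : Fin k → (ι → ZMod 2) × (ι → ZMod 2),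
    (∀ i, Qf (v i) = 1) ∧ ∀ i j, i ≠ j → Bf (v i) (v j) = 1

lemma Good.reindex {k : ℕ} (e : ι ≃ κ) (h : Good k ι) : Good k κ := by
  obtain ⟨v, hq, hb⟩ := h
  refine ⟨fun i => ((v i).1 ∘ e.symm, (v i).2 ∘ e.symm), ?_, ?_⟩
  · intro i
    have : Qf ((v i).1 ∘ e.symm, (v i).2 ∘ e.symm) = Qf (v i) := by
      simp only [Qf, dotp, Function.comp]
      exact Equiv.sum_comp e.symm (fun t => (v i).1 t * (v i).2 t)
    rw [this]; exact hq i
  · intro i j hij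
    have : Bf ((v i).1 ∘ e.symm, (v i).2 ∘ e.symm) ((v j).1 ∘ e.symm, (v j).2 ∘ e.symm)
        = Bf (v i) (v j) := by
      simp only [Bf, dotp, Function.comp]
      rw [Equiv.sum_comp e.symm (fun t => (v i).1 t * (v j).2 t),
        Equiv.sum_comp e.symm (fun t => (v i).2 t * (v j).1 t)]
    rw [this]; exact hb i j hij

/-- padding -/
def padp (p : (ι → ZMod 2) × (ι → ZMod 2)) (q : (κ → ZMod 2) × (κ → ZMod 2)) :
    ((ι ⊕ κ) → ZMod 2) × ((ι ⊕ κ) → ZMod 2) :=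
  (Sum.elim p.1 q.1, Sum.elim p.2 q.2)

lemma Qf_padp (p : (ι → ZMod 2) × (ι → ZMod 2)) (q : (κ → ZMod 2) × (κ → ZMod 2)) :
    Qf (padp p q) = Qf p + Qf q := by
  simp [Qf, padp, dotp, Fintype.sum_sum_type]

lemma Bf_padp (p p' : (ι → ZMod 2) × (ι → ZMod 2)) (q q' : (κ → ZMod 2) × (κ → ZMod 2)) :
    Bf (padp p q) (padp p' q') = Bf p p' + Bf q q' := by
  simp [Bf, padp, dotp, Fintype.sum_sum_type]
  abel

lemma Bf_self (p : (ι → ZMod 2) × (ι → ZMod 2)) : Bf p p = 0 := by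
  have : ∀ a : ZMod 2, a + a = 0 := by decide
  rw [Bf, dotp_comm]; exact this _

lemma Bf_zero_left (p : (ι → ZMod 2) × (ι → ZMod 2)) : Bf (0, 0) p = 0 := by
  simp [Bf, dotp_zero_left]

lemma Bf_zero_right (p : (ι → ZMod 2) × (ι → ZMod 2)) : Bf p (0, 0) = 0 := by
  simp [Bf, dotp_zero_right]


def fam3 : Fin 7 → (Fin 3 → ZMod 2) × (Fin 3 → ZMod 2) :=
 ![(![0,0,1], ![0,0,1]),
  (![0,1,0], ![0,1,1]),
  (![0,1,1], ![1,1,0]),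
  (![1,0,0], ![1,1,1]),
  (![1,0,1], ![1,0,0]),
  (![1,1,0], ![1,0,1]),
  (![1,1,1], ![0,1,0])]

def fam4 : Fin 8 → (Fin 4 → ZMod 2) × (Fin 4 → ZMod 2) :=
 ![(![0,0,1,0], ![0,0,1,1]),
  (![0,1,0,0], ![0,1,1,1]),
  (![0,1,1,0], ![1,1,0,1]),
  (![1,0,0,0], ![1,1,1,1]),
  (![1,0,1,0], ![1,0,0,1]),
  (![1,1,0,0], ![1,0,1,1]),
  (![1,1,1,0], ![0,1,0,1]),
  (![0,0,0,1], ![0,0,0,1])]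

def fam5 : Fin 9 → (Fin 5 → ZMod 2) × (Fin 5 → ZMod 2) :=
 ![(![0,0,1,0,0], ![0,0,1,1,1]),
  (![0,1,0,0,0], ![0,1,1,1,1]),
  (![0,1,1,0,0], ![1,1,0,1,1]),
  (![1,0,0,0,0], ![1,1,1,1,1]),
  (![1,0,1,0,0], ![1,0,0,1,1]),
  (![1,1,0,0,0], ![1,0,1,1,1]),
  (![1,1,1,0,0], ![0,1,0,1,1]),
  (![0,0,0,1,0], ![0,0,0,1,1]),
  (![0,0,0,0,1], ![0,0,0,0,1])]

def fam6 : Fin 11 → (Fin 6 → ZMod 2) × (Fin 6 → ZMod 2) :=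
 ![(![0,0,0,0,1,0], ![0,0,0,0,1,1]),
  (![0,0,0,1,0,0], ![0,0,0,1,1,1]),
  (![0,0,0,1,1,0], ![0,0,1,1,0,1]),
  (![0,0,1,0,0,0], ![0,0,1,1,1,1]),
  (![0,0,1,0,1,0], ![0,0,1,0,0,1]),
  (![0,0,1,1,0,0], ![0,0,1,0,1,1]),
  (![0,0,1,1,1,0], ![0,0,0,1,0,1]),
  (![0,0,0,0,0,1], ![0,0,0,0,0,1]),
  (![1,0,0,0,0,1], ![1,0,0,0,0,0]),
  (![0,1,0,0,0,1], ![1,1,0,0,0,0]),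
  (![1,1,0,0,0,1], ![0,1,0,0,0,0])]

def svec : (Fin 4 → ZMod 2) × (Fin 4 → ZMod 2) := (![0,0,0,1], ![0,0,0,0])

lemma good3 : Good 7 (Fin 3) := ⟨fam3, by decide, by decide⟩
lemma good4 : Good 8 (Fin 4) := ⟨fam4, by decide, by decide⟩
lemma good5 : Good 9 (Fin 5) := ⟨fam5, by decide, by decide⟩
lemma good6 : Good 11 (Fin 6) := ⟨fam6, by decide, by decide⟩

variable {ι : Type*} [Fintype ι]

lemma Qf_zero : Qf ((0, 0) : (ι → ZMod 2) × (ι → ZMod 2)) = 0 := dotp_zero_left 0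

lemma Good.combine {k : ℕ} (h : Good k ι) : Good (k + 8) (ι ⊕ Fin 4) := by
  obtain ⟨v, hq, hb⟩ := h
  have hQl : ∀ j, Qf (fam4 j) = 1 := by decide
  have hBl : ∀ i j, i ≠ j → Bf (fam4 i) (fam4 j) = 1 := by decide
  have hQs : Qf svec = 0 := by decide
  have hBs : ∀ j, Bf svec (fam4 j) = 1 := by decide
  have hBs' : ∀ j, Bf (fam4 j) svec = 1 := by decide
  have hBss : Bf svec svec = (0 : ZMod 2) := by decide
  -- family over Fin k ⊕ Fin 8
  set w : (Fin k ⊕ Fin 8) → ((ι ⊕ Fin 4) → ZMod 2) × ((ι ⊕ Fin 4) → ZMod 2) :=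
    Sum.elim (fun i => padp (v i) svec) (fun j => padp (0, 0) (fam4 j)) with hw
  have hwq : ∀ i, Qf (w i) = 1 := by
    rintro (i | j)
    · simp only [hw, Sum.elim_inl, Qf_padp, hq i, hQs, add_zero]
    · simp only [hw, Sum.elim_inr, Qf_padp, hQl j, Qf_zero, zero_add]
  have hwb : ∀ i j, i ≠ j → Bf (w i) (w j) = 1 := by
    rintro (i | i) (j | j) hij
    · have hij' : i ≠ j := fun hh => hij (by rw [hh])
      simp only [hw, Sum.elim_inl, Bf_padp, hb i j hij', hBss, add_zero]
    · simp only [hw, Sum.elim_inl, Sum.elim_inr, Bf_padp, Bf_zero_right, hBs j, zero_add]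
    · simp only [hw, Sum.elim_inl, Sum.elim_inr, Bf_padp, Bf_zero_left, hBs' i, zero_add]
    · have hij' : i ≠ j := fun hh => hij (by rw [hh])
      simp only [hw, Sum.elim_inr, Bf_padp, hBl i j hij', Bf_zero_left, zero_add]
  exact ⟨fun i => w (finSumFinEquiv.symm i), fun i => hwq _,
    fun i j hij => hwb _ _ (fun hh => hij (finSumFinEquiv.symm.injective hh))⟩


section Matrices

variable {K : Type*} [Field K] {ι : Type*} [Fintype ι] [DecidableEq ι]

/-- sign character -/
def sgn (K : Type*) [Field K] (a : ZMod 2) : K := if a = 1 then -1 else 1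

lemma sgn_zero : sgn K 0 = 1 := by norm_num [sgn]

lemma sgn_one : sgn K 1 = -1 := by norm_num [sgn]

lemma sgn_add (a b : ZMod 2) : sgn K (a + b) = sgn K a * sgn K b := by
  have h : ∀ c : ZMod 2, c = 0 ∨ c = 1 := by decide
  rcases h a with ha | ha <;> rcases h b with hb | hb <;> subst ha <;> subst hb
  · rw [add_zero, sgn_zero, one_mul]
  · rw [zero_add, sgn_zero, one_mul]
  · rw [add_zero, sgn_zero, mul_one]
  · rw [show (1 + 1 : ZMod 2) = 0 from by decide, sgn_zero, sgn_one]; norm_num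

lemma sgn_mul_self (a : ZMod 2) : sgn K a * sgn K a = 1 := by
  have h : ∀ c : ZMod 2, c = 0 ∨ c = 1 := by decide
  rcases h a with ha | ha <;> subst ha
  · rw [sgn_zero, one_mul]
  · rw [sgn_one]; norm_num

lemma sgn_add_eq_zero {a b : ZMod 2} (h : a + b = 1) : sgn K a + sgn K b = 0 := by
  have hc : ∀ c : ZMod 2, c = 0 ∨ c = 1 := by decide
  rcases hc a with ha | ha <;> rcases hc b with hb | hb <;> subst ha <;> subst hb
  · exfalso; revert h; decide
  · rw [sgn_zero, sgn_one]; norm_num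
  · rw [sgn_zero, sgn_one]; norm_num
  · exfalso; revert h; decide

omit [Fintype ι] [DecidableEq ι] in
lemma addV_self (x : ι → ZMod 2) : x + x = 0 := by
  funext t
  have h : ∀ c : ZMod 2, c + c = 0 := by decide
  exact h (x t)

/-- Generalized Pauli matrix -/
def Pm (K : Type*) [Field K] {ι : Type*} [Fintype ι] [DecidableEq ι] (x z : ι → ZMod 2) :
    Matrix (ι → ZMod 2) (ι → ZMod 2) K :=
  Matrix.of fun i j => if i = j + x then sgn K (dotp z j) else 0

lemma Pm_zero : Pm K (0 : ι → ZMod 2) 0 = 1 := by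
  ext i j
  simp [Pm, dotp_zero_left, sgn_zero, Matrix.one_apply, eq_comm]

lemma Pm_mul (x z x' z' : ι → ZMod 2) :
    Pm K x z * Pm K x' z' = sgn K (dotp z x') • Pm K (x + x') (z + z') := by
  ext i j
  rw [Matrix.mul_apply]
  rw [Finset.sum_eq_single (j + x')]
  · simp only [Pm, Matrix.of_apply, Matrix.smul_apply, smul_eq_mul]
    have heq : j + x' + x = j + (x + x') := by abel
    rw [heq]
    by_cases hij : i = j + (x + x')
    · rw [if_pos hij, if_pos hij, dotp_add_right, dotp_add_left, sgn_add, sgn_add]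
      simp only [eq_self_iff_true, if_true]
      ring
    · rw [if_neg hij, if_neg hij, zero_mul, mul_zero]
  · intro b _ hb
    simp only [Pm, Matrix.of_apply]
    rw [if_neg hb, mul_zero]
  · intro hh
    exact absurd (Finset.mem_univ _) hh

lemma Pm_transpose (x z : ι → ZMod 2) :
    (Pm K x z)ᵀ = sgn K (dotp z x) • Pm K x z := by
  ext i j
  simp only [Matrix.transpose_apply, Pm, Matrix.of_apply, Matrix.smul_apply, smul_eq_mul]
  by_cases h : i = j + x
  · have h' : j = i + x := by rw [h, add_assoc, addV_self, add_zero]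
    rw [if_pos h', if_pos h, h, dotp_add_right, sgn_add]
    ring
  · have h' : j ≠ i + x := fun hh => h (by rw [hh, add_assoc, addV_self, add_zero])
    rw [if_neg h', if_neg h, mul_zero]

lemma good_to_matrices {k : ℕ} (h : Good k ι) :
    ∃ A : Fin (k+1) → Matrix (ι → ZMod 2) (ι → ZMod 2) K,
      (∀ i, (A i)ᵀ * A i = 1) ∧ ∀ i j, i ≠ j → (A i)ᵀ * A j + (A j)ᵀ * A i = 0 := by
  obtain ⟨v, hq, hb⟩ := h
  have hq1 : ∀ t, dotp (v t).1 (v t).2 = 1 := hq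
  have hq2 : ∀ t, dotp (v t).2 (v t).1 = 1 := fun t => by rw [dotp_comm]; exact hq1 t
  refine ⟨Fin.cons 1 (fun i => Pm K (v i).1 (v i).2), ?_, ?_⟩
  · intro i
    refine Fin.cases ?_ ?_ i
    · simp
    · intro t
      simp only [Fin.cons_succ]
      rw [Pm_transpose, Matrix.smul_mul, Pm_mul, addV_self, addV_self, Pm_zero, smul_smul,
        hq2 t, sgn_mul_self, one_smul]
  · intro i j
    refine Fin.cases ?_ ?_ i
    · refine Fin.cases ?_ ?_ j
      · intro hij; exact absurd rfl hij
      · intro t _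
        simp only [Fin.cons_zero, Fin.cons_succ, Matrix.transpose_one, one_mul, Matrix.mul_one]
        rw [Pm_transpose, hq2 t, sgn_one, neg_smul, one_smul, add_neg_cancel]
    · intro s
      refine Fin.cases ?_ ?_ j
      · intro _
        simp only [Fin.cons_zero, Fin.cons_succ, Matrix.transpose_one, one_mul, Matrix.mul_one]
        rw [Pm_transpose, hq2 s, sgn_one, neg_smul, one_smul, neg_add_cancel]
      · intro t hij
        have hst : s ≠ t := fun hh => hij (by rw [hh])
        simp only [Fin.cons_succ]
        rw [Pm_transpose, Pm_transpose, Matrix.smul_mul, Matrix.smul_mul, Pm_mul, Pm_mul,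
          hq2 s, hq2 t, sgn_one, smul_smul, smul_smul,
          show (v t).1 + (v s).1 = (v s).1 + (v t).1 from add_comm _ _,
          show (v t).2 + (v s).2 = (v s).2 + (v t).2 from add_comm _ _,
          ← add_smul]
        have hB : dotp (v s).2 (v t).1 + dotp (v t).2 (v s).1 = 1 := by
          have h2 := hb s t hst
          rw [Bf, dotp_comm (v s).1] at h2
          rw [add_comm]
          exact h2
        rw [show -1 * sgn K (dotp (v s).2 (v t).1) + -1 * sgn K (dotp (v t).2 (v s).1)
              = -(sgn K (dotp (v s).2 (v t).1) + sgn K (dotp (v t).2 (v s).1)) from by ring,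
          sgn_add_eq_zero hB, neg_zero, zero_smul]

end Matrices

lemma good_main : ∀ m : ℕ, 3 ≤ m → Good (8 * (m / 4) + 2 ^ (m % 4) - 1) (Fin m) := by
  intro m
  induction m using Nat.strong_induction_on with
  | _ m ih =>
    intro hm
    by_cases h7 : m < 7
    · interval_cases m
      · exact good3
      · exact good4
      · exact good5
      · exact good6
    · have g := ((ih (m - 4) (by omega) (by omega)).combine).reindex
        ((finSumFinEquiv (m := m - 4) (n := 4)).trans (finCongr (show m - 4 + 4 = m by omega)))
      have harith : (8 * ((m - 4) / 4) + 2 ^ ((m - 4) % 4) - 1) + 8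
          = 8 * (m / 4) + 2 ^ (m % 4) - 1 := by
        have h1 : (m - 4) / 4 + 1 = m / 4 := by omega
        have h2 : (m - 4) % 4 = m % 4 := by omega
        have h3 : 1 ≤ 2 ^ (m % 4) := Nat.one_le_two_pow
        rw [h2]
        omega
      rwa [harith] at g

end HRaux

theorem hurwitz_radon_formulas_exist (K : Type*) [Field K] :
    ∀ m : ℕ, 3 ≤ m → SOSFormula K (hrRho (2 ^ m)) (2 ^ m) (2 ^ m) := by
  intro m hm
  obtain ⟨A, h1, h2⟩ := HRaux.good_to_matrices (K := K) (HRaux.good_main m hm)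
  have hcard : Fintype.card (Fin m → ZMod 2) = 2 ^ m := by
    simp [Fintype.card_fun]
  let e : (Fin m → ZMod 2) ≃ Fin (2 ^ m) := Fintype.equivFinOfCardEq hcard
  have hr : hrRho (2 ^ m) = (8 * (m / 4) + 2 ^ (m % 4) - 1) + 1 := by
    have hfact : (2 ^ m : ℕ).factorization 2 = m := by
      rw [Nat.Prime.factorization_pow Nat.prime_two]
      simp
    unfold hrRho
    rw [hfact]
    have h3 : 1 ≤ 2 ^ (m % 4) := Nat.one_le_two_pow
    omega
  rw [hr]
  refine ⟨fun i => (A i).submatrix e.symm e.symm, ?_, ?_⟩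
  · intro i
    rw [Matrix.transpose_submatrix, Matrix.submatrix_mul_equiv, h1 i,
      Matrix.submatrix_one_equiv]
  · intro i j hij
    rw [Matrix.transpose_submatrix, Matrix.transpose_submatrix,
      Matrix.submatrix_mul_equiv, Matrix.submatrix_mul_equiv]
    have hadd : ((A i)ᵀ * A j).submatrix ⇑e.symm ⇑e.symm + ((A j)ᵀ * A i).submatrix ⇑e.symm ⇑e.symm
        = (((A i)ᵀ * A j) + ((A j)ᵀ * A i)).submatrix ⇑e.symm ⇑e.symm := rfl
    rw [hadd, h2 i j hij]
    rfl
end
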